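/- arXiv:1003.0118 — 2 statements merged into one kernel-verified Lean document; each statement's English description precedes it below -/
import Mathlib

section
/- In a stochastic BPA game with simple target set T, if the uniform strategy σ (which at every player-Box configuration assigns the uniform distribution on outgoing edges) is used, then for every symbol X ∈ W_Box(T,>0) ∩ Γ and every strategy π of player Diamond, there exists a path in the play G(σ,π) from X to a configuration in T whose length is at most 2^{2|Γ|} and all of whose configurations have length at most 2|Γ|. -/
open scoped Classical

/-- A stochastic BPA game: finite stack alphabet `Γ`, rules `X → α` with
`|α| ≤ 2`, symbols partitioned among player Box, player Diamond, and
probabilistic symbols, the latter carrying positive rational distributions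
over their rules. -/
structure BPA (Γ : Type*) [Fintype Γ] where
  rule : Γ → List Γ → Prop
  rule_len : ∀ X α, rule X α → α.length ≤ 2
  rule_total : ∀ X, ∃ α, rule X α
  isBox : Γ → Prop
  isDiamond : Γ → Prop
  isCirc : Γ → Prop
  cover : ∀ X, isBox X ∨ isDiamond X ∨ isCirc X
  disjBD : ∀ X, ¬ (isBox X ∧ isDiamond X)
  disjBC : ∀ X, ¬ (isBox X ∧ isCirc X)
  disjDC : ∀ X, ¬ (isDiamond X ∧ isCirc X)
  prob : Γ → List Γ → ℝ
  prob_nonneg : ∀ X α, 0 ≤ prob X α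
  prob_rat : ∀ X α, ∃ q : ℚ, prob X α = (q : ℝ)
  prob_supp : ∀ X α, isCirc X → (0 < prob X α ↔ rule X α)
  prob_sum : ∀ X, isCirc X → ∑' α, prob X α = 1

variable {Γ : Type*} [Fintype Γ]

/-- A history-dependent randomized strategy for the player owning the symbols
satisfying `own` in the stochastic game induced by a BPA game: to every history
(sequence of configurations) and current configuration `X :: β` with `own X`,
it assigns a probability distribution on the applicable rules. -/
structure BPA.Strat (Δ : BPA Γ) (own : Γ → Prop) where
  f : List (List Γ) → List Γ → List Γ → ℝ
  nonneg : ∀ w c α, 0 ≤ f w c α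
  supp : ∀ w X β α, own X → f w (X :: β) α ≠ 0 → Δ.rule X α
  sum_one : ∀ w X β, own X → ∑' α, f w (X :: β) α = 1

/-- The distribution on rules chosen at configuration `c` after history `w`. -/
noncomputable def BPA.choice (Δ : BPA Γ) (σ : Δ.Strat Δ.isBox)
    (π : Δ.Strat Δ.isDiamond) (w : List (List Γ)) (c : List Γ) (α : List Γ) : ℝ :=
  match c with
  | [] => 0
  | X :: _ => if Δ.isBox X then σ.f w c α else if Δ.isDiamond X then π.f w c α
      else Δ.prob X α

/-- One-step transition probability between configurations in the play
induced by a BPA game (the empty configuration `ε` loops with probability 1,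
and `X :: β` moves to `α ++ β` for a rule `X → α`). -/
noncomputable def BPA.stepP (Δ : BPA Γ) (σ : Δ.Strat Δ.isBox)
    (π : Δ.Strat Δ.isDiamond) (w : List (List Γ)) (c c' : List Γ) : ℝ :=
  match c with
  | [] => if c' = [] then 1 else 0
  | X :: β => ∑' α : List Γ,
      if α ++ β = c' ∧ Δ.rule X α then Δ.choice σ π w (X :: β) α else 0

/-- Probability of reaching `T` from configuration `c` within at most `n`
transitions, after history `w`. -/
noncomputable def BPA.reachN (Δ : BPA Γ) (σ : Δ.Strat Δ.isBox)
    (π : Δ.Strat Δ.isDiamond) (T : Set (List Γ)) :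
    ℕ → List (List Γ) → List Γ → ℝ
  | 0, _, c => if c ∈ T then 1 else 0
  | n+1, w, c => if c ∈ T then 1 else
      ∑' c', Δ.stepP σ π w c c' * BPA.reachN Δ σ π T n (w ++ [c]) c'

/-- Probability `P_c^{σ,π}(Reach(T))` of reaching `T` from configuration `c`. -/
noncomputable def BPA.reachP (Δ : BPA Γ) (σ : Δ.Strat Δ.isBox)
    (π : Δ.Strat Δ.isDiamond) (T : Set (List Γ)) (c : List Γ) : ℝ :=
  ⨆ n, Δ.reachN σ π T n [] c

/-- The winning region `W_Box(T, >0)`. -/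
def BPA.WBoxPos (Δ : BPA Γ) (T : Set (List Γ)) : Set (List Γ) :=
  {c | ∃ σ : Δ.Strat Δ.isBox, ∀ π : Δ.Strat Δ.isDiamond, 0 < Δ.reachP σ π T c}

/-- The winning region `W_Box(T, =1)`. -/
def BPA.WBoxOne (Δ : BPA Γ) (T : Set (List Γ)) : Set (List Γ) :=
  {c | ∃ σ : Δ.Strat Δ.isBox, ∀ π : Δ.Strat Δ.isDiamond, Δ.reachP σ π T c = 1}

/-- The winning region `W_Diamond(T, =0)`. -/
def BPA.WDiaZero (Δ : BPA Γ) (T : Set (List Γ)) : Set (List Γ) :=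
  {c | ∃ π : Δ.Strat Δ.isDiamond, ∀ σ : Δ.Strat Δ.isBox, Δ.reachP σ π T c = 0}

/-- The winning region `W_Diamond(T, <1)`. -/
def BPA.WDiaLtOne (Δ : BPA Γ) (T : Set (List Γ)) : Set (List Γ) :=
  {c | ∃ π : Δ.Strat Δ.isDiamond, ∀ σ : Δ.Strat Δ.isBox, Δ.reachP σ π T c < 1}

/-- The language `{[X] : X ∈ S}` of one-letter words over a set of symbols. -/
def symLang (S : Set Γ) : Language Γ := {c | ∃ X ∈ S, c = [X]}

/-- The simple set of target configurations `S·Γ*` determined by the set of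
symbols `S`: membership depends only on the top stack symbol, and `ε ∉ S·Γ*`. -/
def topLang (S : Set Γ) : Language Γ := {c | ∃ X β, c = X :: β ∧ X ∈ S}


/-!
Whether a configuration `Y :: β` is winning for Box depends only on `Y` and on whether `β` is
winning, so winning configurations are recognised by a two-state automaton that reads the
stack bottom-up; its transitions form a set `A ⊆ Bool × Γ`. This set is an attractor: it is
obtained by iterating a one-step controllable-predecessor operator on `Bool × Γ`, and it
stabilises after `|Bool × Γ| = 2|Γ|` rounds. The configurations the automaton rejects form a
trap that Diamond never has to leave, so it accepts every configuration of `W_Box(T, >0)`.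
Conversely, by induction on the round `n` in which `(b, X)` enters `A`, against a fully
supported Box strategy (such as the uniform one) and any Diamond strategy there is a path from
`X :: β` to `T` that is at most `2^n - 1` steps longer than a path from `β` (needed only when
`b` is true) and at most `n` symbols higher: a rule `X → Y Z` costs one step plus two paths of
round `< n`.
-/

theorem Set.iterate_subset_iterate_card {ι : Type*} [Fintype ι] {F : Set ι → Set ι}
    (hF : ∀ s, s ⊆ F s) (s : Set ι) (n : ℕ) : F^[n] s ⊆ F^[Fintype.card ι] s := by
  have mono : Monotone fun n => F^[n] s :=
    monotone_nat_of_le_succ fun n => by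
      rw [Function.iterate_succ_apply']
      exact hF _
  obtain ⟨m, hm, hfix⟩ : ∃ m ≤ Fintype.card ι, F (F^[m] s) = F^[m] s := by
    by_contra! hne
    have hgrow : ∀ m ≤ Fintype.card ι + 1, m ≤ (F^[m] s).ncard := by
      intro m
      induction m with
      | zero => exact fun _ => Nat.zero_le _
      | succ m ih =>
        intro hm
        have hlt : F^[m] s ⊂ F^[m + 1] s := by
          rw [Function.iterate_succ_apply']
          exact (hF _).ssubset_of_ne (hne m (by omega)).symm
        have := Set.ncard_lt_ncard hlt
        have := ih (by omega)
        omega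
    have := hgrow _ le_rfl
    have := Set.ncard_le_card (F^[Fintype.card ι + 1] s)
    rw [Nat.card_eq_fintype_card] at this
    omega
  rcases le_or_gt n m with hnm | hmn
  · exact (mono hnm).trans (mono hm)
  · obtain ⟨j, rfl⟩ := Nat.exists_eq_add_of_le hmn.le
    rw [add_comm, Function.iterate_add_apply, Function.IsFixedPt.iterate hfix j]
    exact mono hm

namespace BPA

/-- `G` holds after one move from `X` with positive probability, whatever Diamond does. -/
def CPre (Δ : BPA Γ) (G : List Γ → Prop) (X : Γ) : Prop :=
  (Δ.isDiamond X → ∀ α, Δ.rule X α → G α) ∧ (¬ Δ.isDiamond X → ∃ α, Δ.rule X α ∧ G α)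

/-- The state reached by the automaton with transitions `P` after reading `γ` bottom-up,
starting from the state `b` of the stack below `γ`. -/
noncomputable def status {Γ : Type*} (P : Set (Bool × Γ)) (b : Bool) (γ : List Γ) : Bool :=
  γ.foldr (fun Y b => decide ((b, Y) ∈ P)) b

theorem status_append {Γ : Type*} (P : Set (Bool × Γ)) (b : Bool) (γ δ : List Γ) :
    status P b (γ ++ δ) = status P (status P b δ) γ :=
  List.foldr_append

section Attractor

variable (Δ : BPA Γ) (ΓT : Set Γ)

def attrStep (P : Set (Bool × Γ)) : Set (Bool × Γ) :=
  P ∪ {p | p.2 ∈ ΓT ∨ Δ.CPre (fun α => status P p.1 α = true) p.2}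

def attrStage (n : ℕ) : Set (Bool × Γ) :=
  (Δ.attrStep ΓT)^[n] ∅

def attr : Set (Bool × Γ) :=
  Δ.attrStage ΓT (Fintype.card (Bool × Γ))

theorem attrStep_attr_subset : Δ.attrStep ΓT (Δ.attr ΓT) ⊆ Δ.attr ΓT := by
  have := Set.iterate_subset_iterate_card (F := Δ.attrStep ΓT) (fun _ => Set.subset_union_left)
    ∅ (Fintype.card (Bool × Γ) + 1)
  rwa [Function.iterate_succ_apply'] at this

def winSet : Set (List Γ) :=
  {c | status (Δ.attr ΓT) false c = true}

variable {Δ ΓT}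

theorem cons_mem_winSet {X : Γ} {β : List Γ}
    (h : X ∈ ΓT ∨ Δ.CPre (· ++ β ∈ Δ.winSet ΓT) X) : X :: β ∈ Δ.winSet ΓT := by
  have : (status (Δ.attr ΓT) false β, X) ∈ Δ.attr ΓT :=
    Δ.attrStep_attr_subset ΓT
      (Or.inr (by simpa only [winSet, Set.mem_ofPred_eq, status_append] using h))
  simpa [winSet, status] using this

end Attractor

section Trap

variable (Δ : BPA Γ)

structure IsTrap (T C : Set (List Γ)) : Prop where
  disjoint : Disjoint C T
  stay : ∀ X β α, X :: β ∈ C → ¬ Δ.isDiamond X → Δ.rule X α → α ++ β ∈ C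
  escape : ∀ X β, X :: β ∈ C → Δ.isDiamond X → ∃ α, Δ.rule X α ∧ α ++ β ∈ C

noncomputable def stayMove (C : Set (List Γ)) (X : Γ) (β : List Γ) : List Γ :=
  if h : ∃ α, Δ.rule X α ∧ α ++ β ∈ C then h.choose else (Δ.rule_total X).choose

variable {Δ}

theorem rule_stayMove (C : Set (List Γ)) (X : Γ) (β : List Γ) :
    Δ.rule X (Δ.stayMove C X β) := by
  unfold stayMove
  split_ifs with h
  exacts [h.choose_spec.1, (Δ.rule_total X).choose_spec]

theorem stayMove_append_mem {C : Set (List Γ)} {X : Γ} {β : List Γ}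
    (h : ∃ α, Δ.rule X α ∧ α ++ β ∈ C) : Δ.stayMove C X β ++ β ∈ C := by
  rw [stayMove, dif_pos h]
  exact h.choose_spec.2

variable (Δ) in
noncomputable def stayStrat (C : Set (List Γ)) (own : Γ → Prop) : Δ.Strat own where
  f _ c α := match c with
    | [] => 0
    | X :: β => if α = Δ.stayMove C X β then 1 else 0
  nonneg _ c α := by
    rcases c with _ | ⟨X, β⟩
    · exact le_rfl
    · dsimp only
      split_ifs <;> norm_num
  supp _ X β α _ h := by
    dsimp only at h
    rw [ite_ne_right_iff] at h
    exact h.1 ▸ rule_stayMove C X β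
  sum_one _ _ _ _ := tsum_ite_eq _ 1

variable {T C : Set (List Γ)}

theorem IsTrap.stepP_eq_zero (hC : Δ.IsTrap T C) (σ : Δ.Strat Δ.isBox) (w : List (List Γ))
    {c c' : List Γ} (hc : c ∈ C) (hc' : c' ∉ C) :
    Δ.stepP σ (Δ.stayStrat C Δ.isDiamond) w c c' = 0 := by
  rcases c with _ | ⟨X, β⟩
  · exact if_neg (by rintro rfl; exact hc' hc)
  · refine (tsum_congr fun α => ?_).trans tsum_zero
    rw [ite_eq_right_iff]
    rintro ⟨rfl, hr⟩
    by_cases hD : Δ.isDiamond X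
    · rw [choice, if_neg (fun hB => Δ.disjBD X ⟨hB, hD⟩), if_pos hD]
      refine if_neg ?_
      rintro rfl
      exact hc' (stayMove_append_mem (hC.escape X β hc hD))
    · exact absurd (hC.stay X β α hc hD hr) hc'

theorem IsTrap.reachN_eq_zero (hC : Δ.IsTrap T C) (σ : Δ.Strat Δ.isBox) (n : ℕ) :
    ∀ w c, c ∈ C → Δ.reachN σ (Δ.stayStrat C Δ.isDiamond) T n w c = 0 := by
  induction n with
  | zero => exact fun _ c hc => if_neg (Set.disjoint_left.mp hC.disjoint hc)
  | succ n ih =>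
    intro w c hc
    refine (if_neg (Set.disjoint_left.mp hC.disjoint hc)).trans
      ((tsum_congr fun c' => ?_).trans tsum_zero)
    by_cases hc' : c' ∈ C
    · rw [ih _ c' hc', mul_zero]
    · rw [hC.stepP_eq_zero σ w hc hc', zero_mul]

theorem IsTrap.notMem_WBoxPos (hC : Δ.IsTrap T C) {c : List Γ} (hc : c ∈ C) :
    c ∉ Δ.WBoxPos T := by
  rintro ⟨σ, hσ⟩
  have := hσ (Δ.stayStrat C Δ.isDiamond)
  simp only [reachP, hC.reachN_eq_zero σ _ [] c hc, ciSup_const, lt_self_iff_false] at this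

variable (Δ) in
theorem isTrap_compl_winSet (ΓT : Set Γ) : Δ.IsTrap (topLang ΓT) (Δ.winSet ΓT)ᶜ where
  disjoint := Set.disjoint_compl_left_iff_subset.mpr fun _ ⟨_, _, hc, hX⟩ =>
    hc ▸ cons_mem_winSet (Or.inl hX)
  stay _ _ α hc hD hr hα :=
    hc (cons_mem_winSet (Or.inr ⟨fun h => absurd h hD, fun _ => ⟨α, hr, hα⟩⟩))
  escape X β hc hD := by
    by_contra! h
    exact hc (cons_mem_winSet (Or.inr ⟨fun _ α hr => not_not.mp (h α hr), absurd hD⟩))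

theorem WBoxPos_subset_winSet (ΓT : Set Γ) : Δ.WBoxPos (topLang ΓT) ⊆ Δ.winSet ΓT :=
  fun _ hc => by_contra fun h => (Δ.isTrap_compl_winSet ΓT).notMem_WBoxPos h hc

end Trap

def Strat.IsFullySupported {Δ : BPA Γ} {own : Γ → Prop} (σ : Δ.Strat own) : Prop :=
  ∀ w X β α, own X → Δ.rule X α → 0 < σ.f w (X :: β) α

theorem Strat.isFullySupported_of_uniform {Δ : BPA Γ} {own : Γ → Prop} {σ : Δ.Strat own}
    (hunif : ∀ w X β α, own X →
      σ.f w (X :: β) α =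
        if Δ.rule X α then (1 : ℝ) / ({α' | Δ.rule X α'}.ncard : ℝ) else 0) :
    σ.IsFullySupported := by
  intro w X β α hX hr
  have hfin : {α' | Δ.rule X α'}.Finite :=
    (List.finite_length_le Γ 2).subset fun α' => Δ.rule_len X α'
  rw [hunif w X β α hX, if_pos hr]
  exact div_pos one_pos (by exact_mod_cast (Set.ncard_pos hfin).mpr ⟨α, hr⟩)

section Paths

variable (Δ : BPA Γ) (σ : Δ.Strat Δ.isBox) (π : Δ.Strat Δ.isDiamond)

def PosPath (w cs : List (List Γ)) : Prop :=
  ∀ i, i + 1 < cs.length →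
    0 < Δ.stepP σ π (w ++ cs.take i) (cs.getD i []) (cs.getD (i + 1) [])

def ShortPath (T : Set (List Γ)) (L H : ℕ) (c : List Γ) : Prop :=
  ∀ w, ∃ t, (∃ cl ∈ T, (c :: t).getLast? = some cl) ∧ (c :: t).length ≤ L ∧
    (∀ c' ∈ c :: t, c'.length ≤ H) ∧ Δ.PosPath σ π w (c :: t)

variable {Δ σ π}

theorem PosPath.cons {w t : List (List Γ)} {c c' : List Γ} (h : 0 < Δ.stepP σ π w c c')
    (hp : Δ.PosPath σ π (w ++ [c]) (c' :: t)) : Δ.PosPath σ π w (c :: c' :: t) := by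
  rintro (_ | i) hi
  · simpa using h
  · simpa using hp i (by simpa using hi)

variable {T : Set (List Γ)} {L H : ℕ} {c : List Γ}

theorem ShortPath.mono {L' H' : ℕ} (h : Δ.ShortPath σ π T L H c) (hL : L ≤ L') (hH : H ≤ H') :
    Δ.ShortPath σ π T L' H' c := fun w =>
  let ⟨t, hT, hl, hh, hp⟩ := h w
  ⟨t, hT, hl.trans hL, fun c' hc' => (hh c' hc').trans hH, hp⟩

theorem shortPath_of_mem (hc : c ∈ T) : Δ.ShortPath σ π T 1 c.length c := fun _ =>
  ⟨[], ⟨c, hc, rfl⟩, le_rfl, by simp, fun i hi => by simp at hi⟩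

theorem shortPath_of_step (h : ∀ w, ∃ c', 0 < Δ.stepP σ π w c c' ∧ Δ.ShortPath σ π T L H c') :
    Δ.ShortPath σ π T (L + 1) (max H c.length) c := by
  intro w
  obtain ⟨c', hstep, hc'⟩ := h w
  obtain ⟨t, hT, hl, hh, hp⟩ := hc' (w ++ [c])
  refine ⟨c' :: t, by rwa [List.getLast?_cons_cons], by simpa using hl, ?_, hp.cons hstep⟩
  rintro c'' (_ | ⟨_, hc''⟩)
  · exact le_max_right _ _
  · exact (hh c'' hc'').trans (le_max_left _ _)

theorem Strat.exists_pos {own : Γ → Prop} (τ : Δ.Strat own) {X : Γ} (hX : own X)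
    (w : List (List Γ)) (β : List Γ) : ∃ α, Δ.rule X α ∧ 0 < τ.f w (X :: β) α := by
  by_contra! h
  have hzero : ∀ α, τ.f w (X :: β) α = 0 := fun α => by_contra fun hne =>
    hne (le_antisymm (h α (τ.supp w X β α hX hne)) (τ.nonneg w _ α))
  simpa [hzero] using τ.sum_one w X β hX

variable (π) in
theorem choice_pos_of_not_isDiamond (hσ : σ.IsFullySupported) {X : Γ} {α : List Γ}
    (w : List (List Γ)) (β : List Γ) (hD : ¬ Δ.isDiamond X) (hr : Δ.rule X α) :
    0 < Δ.choice σ π w (X :: β) α := by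
  rcases Δ.cover X with hB | hD' | hC
  · rw [choice, if_pos hB]
    exact hσ w X β α hB hr
  · exact absurd hD' hD
  · rw [choice, if_neg (fun hB => Δ.disjBC X ⟨hB, hC⟩), if_neg hD]
    exact (Δ.prob_supp X α hC).mpr hr

theorem stepP_pos {X : Γ} {α β : List Γ} {w : List (List Γ)} (hr : Δ.rule X α)
    (hc : 0 < Δ.choice σ π w (X :: β) α) : 0 < Δ.stepP σ π w (X :: β) (α ++ β) := by
  rw [stepP, tsum_eq_single α fun α' hα' => if_neg fun h => hα' (List.append_cancel_right h.1),
    if_pos ⟨rfl, hr⟩]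
  exact hc

theorem exists_pos_step (hσ : σ.IsFullySupported) {G : List Γ → Prop} {X : Γ}
    (hX : Δ.CPre G X) (w : List (List Γ)) (β : List Γ) :
    ∃ α, Δ.rule X α ∧ G α ∧ 0 < Δ.stepP σ π w (X :: β) (α ++ β) := by
  by_cases hD : Δ.isDiamond X
  · obtain ⟨α, hr, hpos⟩ := π.exists_pos hD w β
    refine ⟨α, hr, hX.1 hD α hr, stepP_pos hr ?_⟩
    rwa [choice, if_neg (fun hB => Δ.disjBD X ⟨hB, hD⟩), if_pos hD]
  · obtain ⟨α, hr, hG⟩ := hX.2 hD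
    exact ⟨α, hr, hG, stepP_pos hr (choice_pos_of_not_isDiamond π hσ w β hD hr)⟩

section Status

variable {P : Set (Bool × Γ)} {K m : ℕ}
  (hP : ∀ b Y β L H, (b, Y) ∈ P → (b = true → Δ.ShortPath σ π T L H β) →
    Δ.ShortPath σ π T (K + L) (max H (β.length + m)) (Y :: β))
include hP

theorem shortPath_of_status {b : Bool} {β : List Γ} (hβ : b = true → Δ.ShortPath σ π T L H β)
    (Y : Γ) (δ : List Γ) (h : status P b (Y :: δ) = true) :
    Δ.ShortPath σ π T ((δ.length + 1) * K + L) (max H (δ.length + β.length + m))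
      (Y :: δ ++ β) := by
  induction δ generalizing Y with
  | nil => simpa using hP b Y β L H (of_decide_eq_true h) hβ
  | cons Z ε ih =>
    have hY : (status P b (Z :: ε), Y) ∈ P := of_decide_eq_true h
    refine (hP _ Y _ _ _ hY (ih Z)).mono (le_of_eq (by simp only [List.length_cons]; ring)) ?_
    simp only [List.length_cons, List.length_append]
    omega

theorem shortPath_append_of_status {b : Bool} {α β : List Γ} (hα : α.length ≤ 2)
    (hs : status P b α = true) (hβ : b = true → Δ.ShortPath σ π T L H β) :
    Δ.ShortPath σ π T (2 * K + L) (max H (β.length + m + 1)) (α ++ β) := by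
  rcases α with _ | ⟨Y, δ⟩
  · exact (hβ hs).mono (by omega) (le_max_left _ _)
  · rw [List.length_cons] at hα
    refine (shortPath_of_status hP hβ Y δ hs).mono ?_ (by omega)
    gcongr

end Status

variable (ΓT : Set Γ)

theorem shortPath_of_mem_attrStage (hσ : σ.IsFullySupported) (n : ℕ) :
    ∀ b X β L H, (b, X) ∈ Δ.attrStage ΓT n → (b = true → Δ.ShortPath σ π (topLang ΓT) L H β) →
      Δ.ShortPath σ π (topLang ΓT) (2 ^ n - 1 + L) (max H (β.length + n)) (X :: β) := by
  induction n with
  | zero => exact fun _ _ _ _ _ h => absurd h (Set.notMem_empty _)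
  | succ n ih =>
    intro b X β L H h hβ
    have hpow : 2 ^ (n + 1) = 2 * 2 ^ n := by ring
    have hpos : 1 ≤ 2 ^ n := Nat.one_le_two_pow
    rw [attrStage, Function.iterate_succ_apply'] at h
    rcases h with h | hT | hX
    · refine (ih b X β L H h hβ).mono ?_ ?_ <;> omega
    · refine (shortPath_of_mem (T := topLang ΓT) ⟨X, β, rfl, hT⟩).mono ?_ ?_
      · omega
      · simp only [List.length_cons]
        omega
    · refine (shortPath_of_step (L := 2 * (2 ^ n - 1) + L) (H := max H (β.length + n + 1))
        fun w => ?_).mono ?_ ?_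
      · obtain ⟨α, hr, hs, hstep⟩ := exists_pos_step hσ hX w β
        exact ⟨α ++ β, hstep, shortPath_append_of_status ih (Δ.rule_len X α hr) hs hβ⟩
      · omega
      · simp only [List.length_cons]
        omega

end Paths

end BPA

/-- Against the uniform strategy of player Box, from every symbol of
`W_Box(T,>0) ∩ Γ` there is a short path to `T` in the play: length at most
`2^(2|Γ|)` and all configurations of length at most `2|Γ|`. -/
theorem uniform_strategy_short_path {Γ : Type*} [Fintype Γ] (Δ : BPA Γ)
    (ΓT : Set Γ) (σ : Δ.Strat Δ.isBox)
    (hunif : ∀ w X β α, Δ.isBox X →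
      σ.f w (X :: β) α =
        if Δ.rule X α then (1 : ℝ) / ({α' | Δ.rule X α'}.ncard : ℝ) else 0)
    (X : Γ) (hX : [X] ∈ Δ.WBoxPos (topLang ΓT)) (π : Δ.Strat Δ.isDiamond) :
    ∃ cs : List (List Γ),
      cs.head? = some [X] ∧
      (∃ cl ∈ topLang ΓT, cs.getLast? = some cl) ∧
      cs.length ≤ 2 ^ (2 * Fintype.card Γ) ∧
      (∀ c ∈ cs, c.length ≤ 2 * Fintype.card Γ) ∧
      (∀ i, i + 1 < cs.length →
        0 < Δ.stepP σ π (cs.take i) (cs.getD i []) (cs.getD (i+1) [])) := by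
  have hmem : (false, X) ∈ Δ.attr ΓT := of_decide_eq_true (Δ.WBoxPos_subset_winSet ΓT hX)
  obtain ⟨t, hlast, hlen, hheight, hpath⟩ :=
    BPA.shortPath_of_mem_attrStage (π := π) ΓT (BPA.Strat.isFullySupported_of_uniform hunif) _
      false X [] 1 0 hmem nofun []
  have hcard : Fintype.card (Bool × Γ) = 2 * Fintype.card Γ := by simp
  rw [hcard, Nat.sub_add_cancel Nat.one_le_two_pow] at hlen
  refine ⟨[X] :: t, rfl, hlast, hlen, fun c hc => ?_, fun i hi => by simpa using hpath i hi⟩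
  simpa [hcard] using hheight c hc
end

section
/- In a stochastic BPA game with simple target set T, the winning region of player Box for reaching T with probability 1 satisfies W_Box(T,=1) = B*DΓ*, where B = W_Box(T_ε,=1) ∩ Γ and D = W_Box(T,=1) ∩ Γ; consequently W_Box(T,=1) is a regular language over Γ. -/
/-!
Since `T` is simple, a play from `X γ` is a play from `X` until `γ` is exposed, and from then on a
play from `γ`. So Box wins `X γ` almost surely if he wins `X` outright, or if he reaches `T ∪ {ε}`
from `X` almost surely and then wins from `γ`. Conversely, a winning strategy for `X γ` projects to
one for `X` with target `T ∪ {ε}`. And if Box wins neither from `X` nor from `γ`, Diamond spoils the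
head and then spoils every continuation from `γ`. Each exposure of `γ` then costs a positive amount,
so the value of `X γ` stays uniformly below `1`. Hence `ε ∉ W` and
`X γ ∈ W ↔ X ∈ D ∨ (X ∈ B ∧ γ ∈ W)`, i.e. `W = B* D Γ*`. This language has only the left quotients
`W`, `Γ*` and `∅`, so it is regular by Myhill–Nerode.
-/

open scoped Classical

variable {Γ : Type*} [Fintype Γ]

section ProperSuffix

variable {α : Type*}

noncomputable def isProperSuffixOf (γ c : List α) : Bool :=
  decide (γ <:+ c ∧ c ≠ γ)

lemma isProperSuffixOf_iff {γ c : List α} :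
    isProperSuffixOf γ c ↔ ∃ d ≠ [], c = d ++ γ := by
  simp only [isProperSuffixOf, decide_eq_true_eq]
  constructor
  · rintro ⟨⟨d, rfl⟩, hne⟩
    exact ⟨d, by rintro rfl; exact hne rfl, rfl⟩
  · rintro ⟨d, hd, rfl⟩
    exact ⟨List.suffix_append d γ, fun h => hd (by simpa using h)⟩

lemma isProperSuffixOf_append {γ d : List α} (hd : d ≠ []) :
    isProperSuffixOf γ (d ++ γ) = true :=
  isProperSuffixOf_iff.mpr ⟨d, hd, rfl⟩

lemma isProperSuffixOf_self (γ : List α) : isProperSuffixOf γ γ = false := by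
  simp [isProperSuffixOf]

lemma exists_rdrop_eq_cons {γ β : List α} {X : α} (h : isProperSuffixOf γ (X :: β)) :
    ∃ d', (X :: β).rdrop γ.length = X :: d' := by
  obtain ⟨_ | ⟨Y, d'⟩, hd, he⟩ := isProperSuffixOf_iff.mp h
  · exact absurd rfl hd
  · obtain ⟨rfl, rfl⟩ : X = Y ∧ β = d' ++ γ := by simpa using he
    exact ⟨d', by rw [← List.cons_append, List.rdrop_append_length]⟩

end ProperSuffix

section TopLang

variable {α : Type*}

lemma nil_notMem_topLang (ΓT : Set α) : [] ∉ (topLang ΓT : Set (List α)) := by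
  rintro ⟨_, _, h, -⟩
  exact List.cons_ne_nil _ _ h.symm

lemma cons_mem_topLang_iff (ΓT : Set α) (X : α) (β : List α) :
    X :: β ∈ (topLang ΓT : Set (List α)) ↔ X ∈ ΓT := by
  show (∃ Y δ, X :: β = Y :: δ ∧ Y ∈ ΓT) ↔ _
  simp

lemma append_mem_topLang_iff (ΓT : Set α) {d : List α} (hd : d ≠ []) (γ : List α) :
    d ++ γ ∈ (topLang ΓT : Set (List α)) ↔ d ∈ (topLang ΓT : Set (List α)) := by
  obtain ⟨X, β, rfl⟩ := List.exists_cons_of_ne_nil hd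
  simp only [List.cons_append, cons_mem_topLang_iff]

end TopLang

section Regular

variable {α : Type*}

lemma nil_notMem_symLang_mul (S : Set α) (M : Language α) : [] ∉ symLang S * M := by
  rintro ⟨_, ⟨X, -, rfl⟩, _, -, h⟩
  exact List.cons_ne_nil _ _ h

lemma cons_mem_symLang_mul_iff (S : Set α) (M : Language α) (X : α) (γ : List α) :
    X :: γ ∈ symLang S * M ↔ X ∈ S ∧ γ ∈ M := by
  constructor
  · rintro ⟨_, ⟨Y, hY, rfl⟩, v, hv, h⟩
    obtain ⟨rfl, rfl⟩ : Y = X ∧ v = γ := by simpa using h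
    exact ⟨hY, hv⟩
  · rintro ⟨hX, hγ⟩
    exact ⟨[X], ⟨X, hX, rfl⟩, γ, hγ, rfl⟩

lemma kstar_symLang_mul_eq (B D : Set α) :
    KStar.kstar (symLang B) * symLang D * (⊤ : Language α)
      = symLang D * ⊤ + symLang B * (KStar.kstar (symLang B) * symLang D * ⊤) := by
  conv_lhs => rw [← Language.one_add_self_mul_kstar_eq_kstar]
  rw [add_mul, add_mul, one_mul, mul_assoc, mul_assoc, mul_assoc]

lemma nil_notMem_kstar_symLang_mul (B D : Set α) :
    [] ∉ KStar.kstar (symLang B) * symLang D * (⊤ : Language α) := by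
  rw [kstar_symLang_mul_eq, Language.mem_add, not_or]
  exact ⟨nil_notMem_symLang_mul _ _, nil_notMem_symLang_mul _ _⟩

lemma cons_mem_kstar_symLang_mul_iff (B D : Set α) (X : α) (γ : List α) :
    X :: γ ∈ KStar.kstar (symLang B) * symLang D * (⊤ : Language α) ↔
      X ∈ D ∨ (X ∈ B ∧ γ ∈ KStar.kstar (symLang B) * symLang D * (⊤ : Language α)) := by
  conv_lhs => rw [kstar_symLang_mul_eq]
  simp only [Language.mem_add, cons_mem_symLang_mul_iff,
    and_iff_left (show γ ∈ (⊤ : Language α) from trivial)]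

lemma Language.isRegular_of_leftQuotient_mem {L : Language α} (S : Set (Language α))
    (hS : S.Finite) (hL : L ∈ S) (hquot : ∀ M ∈ S, ∀ a, M.leftQuotient [a] ∈ S) :
    L.IsRegular := by
  have hmem : ∀ x, ∀ M ∈ S, M.leftQuotient x ∈ S := by
    intro x
    induction x with
    | nil => exact fun M hM => hM
    | cons a x ih =>
      exact fun M hM => (M.leftQuotient_append [a] x).symm ▸ ih _ (hquot M hM a)
  exact Language.IsRegular.of_finite_range_leftQuotient
    (hS.subset (Set.range_subset_iff.mpr fun x => hmem x L hL))

lemma isRegular_kstar_symLang_mul (B D : Set α) :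
    (KStar.kstar (symLang B) * symLang D * (⊤ : Language α)).IsRegular := by
  set K := KStar.kstar (symLang B) * symLang D * (⊤ : Language α)
  refine Language.isRegular_of_leftQuotient_mem {K, ⊤, ⊥} (by simp) (by simp) ?_
  have htop : ∀ a, (⊤ : Language α).leftQuotient [a] = ⊤ := fun a => rfl
  have hbot : ∀ a, (⊥ : Language α).leftQuotient [a] = ⊥ := fun a => rfl
  have hK : ∀ a, K.leftQuotient [a] = if a ∈ D then ⊤ else if a ∈ B then K else ⊥ := by
    intro a
    ext γ
    rw [Language.mem_leftQuotient, List.singleton_append, cons_mem_kstar_symLang_mul_iff]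
    split_ifs with hD hB
    · exact iff_of_true (Or.inl hD) trivial
    · exact ⟨fun h => (h.resolve_left hD).2, fun h => Or.inr ⟨hB, h⟩⟩
    · exact iff_of_false (by tauto) id
  rintro M (rfl | rfl | rfl) a
  · rw [hK]; split_ifs <;> simp
  · simp [htop]
  · simp [hbot]

end Regular

namespace BPA

/-- Payoff within `n` steps of a play that stops in `T` with payoff `a` and at `ε` with payoff
`R w`, where `w` is the history. On the head `d` of `d ++ γ`, `R` plays the role of the value of
the remaining play from `γ`. -/
noncomputable def rewardN (Δ : BPA Γ) (σ : Δ.Strat Δ.isBox) (π : Δ.Strat Δ.isDiamond)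
    (T : Set (List Γ)) (a : ℝ) (R : List (List Γ) → ℝ) :
    ℕ → List (List Γ) → List Γ → ℝ
  | 0, w, c => if c ∈ T then a else if c = [] then R w else 0
  | n + 1, w, c => if c ∈ T then a else if c = [] then R w else
      ∑' c', Δ.stepP σ π w c c' * rewardN Δ σ π T a R n (w ++ [c]) c'

noncomputable def val (Δ : BPA Γ) (σ : Δ.Strat Δ.isBox) (π : Δ.Strat Δ.isDiamond)
    (T : Set (List Γ)) (w : List (List Γ)) (c : List Γ) : ℝ :=
  ⨆ n, Δ.reachN σ π T n w c

variable {Δ : BPA Γ}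

section Play

variable (σ : Δ.Strat Δ.isBox) (π : Δ.Strat Δ.isDiamond)

section Step

lemma choice_cons_cases (w : List (List Γ)) (X : Γ) (β : List Γ) :
    (Δ.isBox X ∧ Δ.choice σ π w (X :: β) = σ.f w (X :: β)) ∨
    (Δ.isDiamond X ∧ Δ.choice σ π w (X :: β) = π.f w (X :: β)) ∨
    (Δ.isCirc X ∧ Δ.choice σ π w (X :: β) = Δ.prob X) := by
  rcases Δ.cover X with h | h | h
  · exact Or.inl ⟨h, funext fun _ => if_pos h⟩
  · refine Or.inr (Or.inl ⟨h, funext fun _ => ?_⟩)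
    exact (if_neg fun hB => Δ.disjBD X ⟨hB, h⟩).trans (if_pos h)
  · refine Or.inr (Or.inr ⟨h, funext fun _ => ?_⟩)
    exact (if_neg fun hB => Δ.disjBC X ⟨hB, h⟩).trans
      (if_neg fun hD => Δ.disjDC X ⟨hD, h⟩)

lemma choice_cons_congr {σ' : Δ.Strat Δ.isBox} {π' : Δ.Strat Δ.isDiamond}
    {u w : List (List Γ)} {X : Γ} {β β' : List Γ}
    (hσ : σ'.f u (X :: β') = σ.f w (X :: β)) (hπ : π'.f u (X :: β') = π.f w (X :: β)) :
    Δ.choice σ' π' u (X :: β') = Δ.choice σ π w (X :: β) := by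
  funext α
  simp only [choice, hσ, hπ]

lemma choice_nonneg (w c α) : 0 ≤ Δ.choice σ π w c α := by
  rcases c with _ | ⟨X, β⟩
  · exact le_rfl
  · rcases choice_cons_cases σ π w X β with ⟨-, h⟩ | ⟨-, h⟩ | ⟨-, h⟩ <;> rw [h]
    exacts [σ.nonneg _ _ _, π.nonneg _ _ _, Δ.prob_nonneg _ _]

lemma tsum_choice (w X β) : ∑' α, Δ.choice σ π w (X :: β) α = 1 := by
  rcases choice_cons_cases σ π w X β with ⟨hX, h⟩ | ⟨hX, h⟩ | ⟨hX, h⟩ <;> rw [h]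
  exacts [σ.sum_one w X β hX, π.sum_one w X β hX, Δ.prob_sum X hX]

lemma summable_choice (w X β) : Summable (Δ.choice σ π w (X :: β)) := by
  by_contra h
  simpa [tsum_eq_zero_of_not_summable h] using tsum_choice σ π w X β

lemma choice_eq_zero_of_not_rule {X α} (w β) (h : ¬ Δ.rule X α) :
    Δ.choice σ π w (X :: β) α = 0 := by
  rcases choice_cons_cases σ π w X β with ⟨hX, e⟩ | ⟨hX, e⟩ | ⟨hX, e⟩ <;> rw [e]
  · exact not_not.mp fun hne => h (σ.supp w X β α hX hne)
  · exact not_not.mp fun hne => h (π.supp w X β α hX hne)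
  · exact le_antisymm (not_lt.mp (mt (Δ.prob_supp X α hX).mp h)) (Δ.prob_nonneg X α)

lemma stepP_cons_append (w X β α) :
    Δ.stepP σ π w (X :: β) (α ++ β) = Δ.choice σ π w (X :: β) α := by
  rw [stepP, tsum_eq_single α fun α' hne => if_neg fun h => hne (List.append_left_injective β h.1)]
  by_cases h : Δ.rule X α
  · simp [h]
  · simp [h, choice_eq_zero_of_not_rule σ π w β h]

lemma exists_rule_of_stepP_ne_zero {w X β c'} (h : Δ.stepP σ π w (X :: β) c' ≠ 0) :
    ∃ α, α ++ β = c' ∧ Δ.rule X α := by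
  by_contra hc
  exact h ((tsum_congr fun α => if_neg fun h' => hc ⟨α, h'⟩).trans tsum_zero)

lemma support_stepP_cons_subset (w X β) :
    Function.support (Δ.stepP σ π w (X :: β)) ⊆ Set.range (· ++ β) := fun _ h =>
  let ⟨α, hα, _⟩ := exists_rule_of_stepP_ne_zero σ π h
  ⟨α, hα⟩

lemma stepP_nonneg (w c c') : 0 ≤ Δ.stepP σ π w c c' := by
  rcases c with _ | ⟨X, β⟩
  · simp only [stepP]; positivity
  · exact tsum_nonneg fun α => by split_ifs <;> simp [choice_nonneg]

lemma summable_stepP (w c) : Summable (Δ.stepP σ π w c) := by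
  rcases c with _ | ⟨X, β⟩
  · exact (hasSum_ite_eq ([] : List Γ) (1 : ℝ)).summable
  · refine ((List.append_left_injective β).summable_iff fun c' hc' => ?_).mp ?_
    · exact Function.notMem_support.mp fun h => hc' (support_stepP_cons_subset σ π w X β h)
    · simpa only [Function.comp_def, stepP_cons_append] using summable_choice σ π w X β

lemma tsum_stepP (w c) : ∑' c', Δ.stepP σ π w c c' = 1 := by
  rcases c with _ | ⟨X, β⟩
  · exact tsum_ite_eq ([] : List Γ) 1
  · rw [← (List.append_left_injective β).tsum_eq (support_stepP_cons_subset σ π w X β)]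
    simpa only [stepP_cons_append] using tsum_choice σ π w X β

variable {σ π} in
lemma stepP_congr {σ' : Δ.Strat Δ.isBox} {π' : Δ.Strat Δ.isDiamond} {u w c}
    (hσ : σ'.f u c = σ.f w c) (hπ : π'.f u c = π.f w c) :
    Δ.stepP σ' π' u c = Δ.stepP σ π w c := by
  rcases c with _ | ⟨X, β⟩
  · rfl
  · funext c'
    simp only [stepP, choice_cons_congr σ π hσ hπ]

lemma summable_stepP_mul {f : List Γ → ℝ} (hf : ∀ c, f c ∈ Set.Icc 0 1) (w c) :
    Summable fun c' => Δ.stepP σ π w c c' * f c' :=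
  (summable_stepP σ π w c).of_nonneg_of_le
    (fun c' => mul_nonneg (stepP_nonneg σ π w c c') (hf c').1)
    (fun c' => mul_le_of_le_one_right (stepP_nonneg σ π w c c') (hf c').2)

lemma tsum_stepP_mul_le_one {f : List Γ → ℝ} (hf : ∀ c, f c ∈ Set.Icc 0 1) (w c) :
    ∑' c', Δ.stepP σ π w c c' * f c' ≤ 1 :=
  (tsum_stepP σ π w c) ▸ (summable_stepP_mul σ π hf w c).tsum_le_tsum
    (fun c' => mul_le_of_le_one_right (stepP_nonneg σ π w c c') (hf c').2)
    (summable_stepP σ π w c)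

end Step

section Reward

open Set

variable (T : Set (List Γ)) {a : ℝ} {R : List (List Γ) → ℝ}

lemma rewardN_of_mem {c} (hc : c ∈ T) (n w) : Δ.rewardN σ π T a R n w c = a := by
  cases n <;> simp [rewardN, hc]

lemma rewardN_nil (hT : [] ∉ T) (n w) : Δ.rewardN σ π T a R n w [] = R w := by
  cases n <;> simp [rewardN, hT]

lemma rewardN_zero_of_ne {c} (hcT : c ∉ T) (hc : c ≠ []) (w) :
    Δ.rewardN σ π T a R 0 w c = 0 := by
  simp [rewardN, hcT, hc]

lemma rewardN_succ_of_ne {c} (hcT : c ∉ T) (hc : c ≠ []) (n w) :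
    Δ.rewardN σ π T a R (n + 1) w c
      = ∑' c', Δ.stepP σ π w c c' * Δ.rewardN σ π T a R n (w ++ [c]) c' := by
  simp [rewardN, hcT, hc]

lemma rewardN_mem_Icc (ha : a ∈ Icc 0 1) (hR : ∀ w, R w ∈ Icc 0 1) (n) :
    ∀ w c, Δ.rewardN σ π T a R n w c ∈ Icc 0 1 := by
  induction n with
  | zero => intro w c; unfold rewardN; split_ifs <;> simp [ha, hR]
  | succ n ih =>
    intro w c
    unfold rewardN
    split_ifs
    · exact ha
    · exact hR w
    · exact ⟨tsum_nonneg fun c' => mul_nonneg (stepP_nonneg σ π w c c') (ih _ c').1,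
        tsum_stepP_mul_le_one σ π (ih _) w c⟩

lemma rewardN_mono {R' : List (List Γ) → ℝ} (ha : a ∈ Icc 0 1) (hR : ∀ w, R w ∈ Icc 0 1)
    (hR' : ∀ w, R' w ∈ Icc 0 1) (hRR' : ∀ w, R w ≤ R' w) {m n : ℕ} (hmn : m ≤ n) (w c) :
    Δ.rewardN σ π T a R m w c ≤ Δ.rewardN σ π T a R' n w c := by
  induction m generalizing n w c with
  | zero =>
    by_cases hcT : c ∈ T
    · simp only [rewardN_of_mem σ π T hcT, le_refl]
    by_cases hc : c = []
    · subst hc; cases n <;> simp [rewardN, hcT, hRR' w]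
    · exact (rewardN_zero_of_ne σ π T hcT hc w).trans_le
        (rewardN_mem_Icc σ π T ha hR' n w c).1
  | succ m ih =>
    obtain ⟨n, rfl⟩ : ∃ k, n = k + 1 := ⟨n - 1, by omega⟩
    by_cases hcT : c ∈ T
    · simp only [rewardN_of_mem σ π T hcT, le_refl]
    by_cases hc : c = []
    · subst hc; simp [rewardN, hcT, hRR' w]
    rw [rewardN_succ_of_ne σ π T hcT hc, rewardN_succ_of_ne σ π T hcT hc]
    exact (summable_stepP_mul σ π (rewardN_mem_Icc σ π T ha hR m _) w c).tsum_le_tsum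
      (fun c' => mul_le_mul_of_nonneg_left (ih (by omega) _ c') (stepP_nonneg σ π w c c'))
      (summable_stepP_mul σ π (rewardN_mem_Icc σ π T ha hR' n _) w c)

lemma rewardN_monotone (ha : a ∈ Icc 0 1) (hR : ∀ w, R w ∈ Icc 0 1) (w c) :
    Monotone fun n => Δ.rewardN σ π T a R n w c :=
  fun _ _ hmn => rewardN_mono σ π T ha hR hR (fun _ => le_rfl) hmn w c

lemma rewardN_add {b : ℝ} {S : List (List Γ) → ℝ} (ha : a ∈ Icc 0 1) (hR : ∀ w, R w ∈ Icc 0 1)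
    (hb : b ∈ Icc 0 1) (hS : ∀ w, S w ∈ Icc 0 1) (n) : ∀ w c,
    Δ.rewardN σ π T a R n w c + Δ.rewardN σ π T b S n w c
      = Δ.rewardN σ π T (a + b) (fun w => R w + S w) n w c := by
  induction n with
  | zero => intro w c; unfold rewardN; split_ifs <;> simp
  | succ n ih =>
    intro w c
    unfold rewardN
    split_ifs
    · rfl
    · rfl
    · rw [← (summable_stepP_mul σ π (rewardN_mem_Icc σ π T ha hR n _) w c).tsum_add
        (summable_stepP_mul σ π (rewardN_mem_Icc σ π T hb hS n _) w c)]
      exact tsum_congr fun c' => by rw [← mul_add, ih]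

lemma rewardN_pos (hT : [] ∉ T) (hR : ∀ w, R w ∈ Icc 0 1) (hRpos : ∀ w, [] ∉ w → 0 < R w)
    (n) : ∀ w c, [] ∉ w → 0 < Δ.rewardN σ π T 0 (fun _ => 1) n w c →
      0 < Δ.rewardN σ π T 0 R n w c := by
  induction n with
  | zero =>
    intro w c hw h
    unfold rewardN at h ⊢
    split_ifs at h ⊢ with hcT hc
    · exact h
    · exact hRpos w hw
    · exact h
  | succ n ih =>
    intro w c hw h
    by_cases hcT : c ∈ T
    · rwa [rewardN_of_mem σ π T hcT] at h ⊢
    by_cases hc : c = []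
    · subst hc; rw [rewardN_nil σ π T hT]; exact hRpos w hw
    rw [rewardN_succ_of_ne σ π T hcT hc] at h ⊢
    have hsum := summable_stepP_mul σ π
      (rewardN_mem_Icc σ π T ⟨le_rfl, zero_le_one⟩ hR n (w ++ [c])) w c
    obtain ⟨c₀, hc₀⟩ : ∃ c₀, 0 < Δ.stepP σ π w c c₀
        * Δ.rewardN σ π T 0 (fun _ => 1) n (w ++ [c]) c₀ := by
      by_contra! hno
      exact h.not_ge (tsum_nonpos hno)
    have hstep := pos_of_mul_pos_left hc₀
      (rewardN_mem_Icc σ π T ⟨le_rfl, zero_le_one⟩ (fun _ => ⟨zero_le_one, le_rfl⟩) n _ c₀).1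
    have hpop := pos_of_mul_pos_right hc₀ (stepP_nonneg σ π w c c₀)
    have hw' : [] ∉ w ++ [c] := by simp [hw, Ne.symm hc]
    exact hsum.tsum_pos (fun c' => mul_nonneg (stepP_nonneg σ π w c c')
      (rewardN_mem_Icc σ π T ⟨le_rfl, zero_le_one⟩ hR n _ c').1) c₀
      (mul_pos hstep (ih _ c₀ hw' hpop))

end Reward

section Value

open Set Filter Topology

variable (T : Set (List Γ))

lemma reachN_eq_rewardN (n) : ∀ w c, Δ.reachN σ π T n w c
    = Δ.rewardN σ π (T \ {[]}) 1 (fun _ => if [] ∈ T then 1 else 0) n w c := by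
  induction n with
  | zero => intro w c; by_cases hc : c = [] <;> simp [reachN, rewardN, hc]
  | succ n ih =>
    intro w c
    by_cases hc : c = []
    · subst hc
      by_cases hT : [] ∈ T
      · simp [reachN, rewardN, hT]
      · simp [reachN, rewardN, hT, stepP, ih, rewardN_nil]
    · simp [reachN, rewardN, hc, ih]

lemma reachN_eq_rewardN_zero (hT : [] ∉ T) (n w c) :
    Δ.reachN σ π T n w c = Δ.rewardN σ π T 1 (fun _ => 0) n w c := by
  simpa [hT] using reachN_eq_rewardN σ π T n w c

lemma reachN_union_nil_eq_rewardN_one (hT : [] ∉ T) (n w c) :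
    Δ.reachN σ π (T ∪ {[]}) n w c = Δ.rewardN σ π T 1 (fun _ => 1) n w c := by
  simpa [hT] using reachN_eq_rewardN σ π (T ∪ {[]}) n w c

lemma reachN_mem_Icc (n w c) : Δ.reachN σ π T n w c ∈ Icc 0 1 :=
  reachN_eq_rewardN σ π T n w c ▸ rewardN_mem_Icc σ π _ ⟨zero_le_one, le_rfl⟩
    (fun _ => by split_ifs <;> simp) n w c

lemma reachN_monotone (w c) : Monotone fun n => Δ.reachN σ π T n w c := by
  simpa only [reachN_eq_rewardN] using rewardN_monotone σ π _ ⟨zero_le_one, le_rfl⟩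
    (fun _ => by split_ifs <;> simp) w c

lemma reachN_of_mem {c} (hc : c ∈ T) (n w) : Δ.reachN σ π T n w c = 1 := by
  cases n <;> simp [reachN, hc]

lemma bddAbove_range_reachN (w c) : BddAbove (range fun n => Δ.reachN σ π T n w c) :=
  ⟨1, by rintro _ ⟨n, rfl⟩; exact (reachN_mem_Icc σ π T n w c).2⟩

lemma reachN_zero_of_notMem {c} (hc : c ∉ T) (w) : Δ.reachN σ π T 0 w c = 0 :=
  if_neg hc

lemma reachN_succ_of_notMem {c} (hc : c ∉ T) (n w) : Δ.reachN σ π T (n + 1) w c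
    = ∑' c', Δ.stepP σ π w c c' * Δ.reachN σ π T n (w ++ [c]) c' :=
  if_neg hc

lemma reachN_le_val (n w c) : Δ.reachN σ π T n w c ≤ Δ.val σ π T w c :=
  le_ciSup (bddAbove_range_reachN σ π T w c) n

lemma tendsto_reachN_val (w c) :
    Tendsto (fun n => Δ.reachN σ π T n w c) atTop (𝓝 (Δ.val σ π T w c)) :=
  tendsto_atTop_ciSup (reachN_monotone σ π T w c) (bddAbove_range_reachN σ π T w c)

lemma val_mem_Icc (w c) : Δ.val σ π T w c ∈ Icc 0 1 :=
  ⟨(reachN_mem_Icc σ π T 0 w c).1.trans (reachN_le_val σ π T 0 w c),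
    ciSup_le fun n => (reachN_mem_Icc σ π T n w c).2⟩

lemma val_of_mem {c} (hc : c ∈ T) (w) : Δ.val σ π T w c = 1 := by
  simp [val, reachN_of_mem σ π T hc]

lemma val_nil (hT : [] ∉ T) (w) : Δ.val σ π T w [] = 0 := by
  simp [val, reachN_eq_rewardN, rewardN_nil, hT]

lemma tsum_stepP_mul_val_le {c} (hc : c ∉ T) (w) :
    ∑' c', Δ.stepP σ π w c c' * Δ.val σ π T (w ++ [c]) c' ≤ Δ.val σ π T w c := by
  refine (summable_stepP_mul σ π (val_mem_Icc σ π T _) w c).tsum_le_of_sum_le fun F => ?_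
  refine le_of_tendsto' (tendsto_finsetSum F fun c' _ =>
    (tendsto_reachN_val σ π T (w ++ [c]) c').const_mul (Δ.stepP σ π w c c')) fun n => ?_
  calc ∑ c' ∈ F, Δ.stepP σ π w c c' * Δ.reachN σ π T n (w ++ [c]) c'
      ≤ ∑' c', Δ.stepP σ π w c c' * Δ.reachN σ π T n (w ++ [c]) c' :=
        (summable_stepP_mul σ π (reachN_mem_Icc σ π T n _) w c).sum_le_tsum F
          fun c' _ => mul_nonneg (stepP_nonneg σ π w c c') (reachN_mem_Icc σ π T n _ c').1
    _ = Δ.reachN σ π T (n + 1) w c := (reachN_succ_of_notMem σ π T hc n w).symm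
    _ ≤ Δ.val σ π T w c := reachN_le_val σ π T (n + 1) w c

end Value

end Play

namespace Strat

variable {own : Γ → Prop}

instance instNonempty : Nonempty (Δ.Strat own) :=
  ⟨{ f := fun _ c α => match c with
        | [] => 0
        | X :: _ => if α = Classical.choose (Δ.rule_total X) then 1 else 0
     nonneg := fun _ c α => by
       rcases c with _ | ⟨X, β⟩
       · exact le_rfl
       · dsimp only; split_ifs <;> norm_num
     supp := fun _ X _ α _ h => by
       dsimp only at h
       split_ifs at h with hα
       · exact hα ▸ Classical.choose_spec (Δ.rule_total X)
       · exact absurd rfl h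
     sum_one := fun _ _ _ _ => tsum_ite_eq _ 1 }⟩

def after (σ : Δ.Strat own) (h : List (List Γ)) : Δ.Strat own where
  f u := σ.f (h ++ u)
  nonneg u := σ.nonneg (h ++ u)
  supp u := σ.supp (h ++ u)
  sum_one u := σ.sum_one (h ++ u)

def proj (σ : Δ.Strat own) (γ : List Γ) : Δ.Strat own where
  f ws d := σ.f (ws.map (· ++ γ)) (d ++ γ)
  nonneg _ _ := σ.nonneg _ _
  supp _ X β := σ.supp _ X (β ++ γ)
  sum_one _ X β := σ.sum_one _ X (β ++ γ)

def Simulates (σ σ' : Δ.Strat own) (γ : List Γ) : Prop :=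
  ∀ ws d, [] ∉ ws → d ≠ [] → σ.f (ws.map (· ++ γ)) (d ++ γ) = σ'.f ws d

lemma simulates_proj (σ : Δ.Strat own) (γ : List Γ) : σ.Simulates (σ.proj γ) γ :=
  fun _ _ _ _ => rfl

/-- Play `σX` on the head `d` of `d ++ γ` until `γ` is exposed, then `Φ h` where `h` is the
history of that first phase. -/
noncomputable def comp (σX : Δ.Strat own) (Φ : List (List Γ) → Δ.Strat own) (γ : List Γ) :
    Δ.Strat own where
  f w c α := if (w ++ [c]).all (isProperSuffixOf γ)
    then σX.f (w.map (·.rdrop γ.length)) (c.rdrop γ.length) α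
    else (Φ (w.takeWhile (isProperSuffixOf γ))).f (w.dropWhile (isProperSuffixOf γ)) c α
  nonneg w c α := by
    split_ifs
    exacts [σX.nonneg _ _ α, (Φ _).nonneg _ _ α]
  supp w X β α hX h := by
    split_ifs at h with hall
    · obtain ⟨d', hd'⟩ := exists_rdrop_eq_cons (List.all_eq_true.mp hall (X :: β) (by simp))
      rw [hd'] at h
      exact σX.supp _ X d' α hX h
    · exact (Φ _).supp _ X β α hX h
  sum_one w X β hX := by
    split_ifs with hall
    · obtain ⟨d', hd'⟩ := exists_rdrop_eq_cons (List.all_eq_true.mp hall (X :: β) (by simp))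
      rw [hd']
      exact σX.sum_one _ X d' hX
    · exact (Φ _).sum_one _ X β hX

variable (σX : Δ.Strat own) (Φ : List (List Γ) → Δ.Strat own) (γ : List Γ)

lemma comp_simulates : (comp σX Φ γ).Simulates σX γ := by
  intro ws d hws hd
  funext α
  have hall : (ws.map (· ++ γ) ++ [d ++ γ]).all (isProperSuffixOf γ) := by
    simp only [List.all_append, List.all_map, List.all_cons, List.all_nil, Bool.and_true,
      isProperSuffixOf_append hd, List.all_eq_true, Function.comp_apply]
    exact fun u hu => isProperSuffixOf_append (by rintro rfl; exact hws hu)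
  simp only [comp, hall, if_true, List.map_map, Function.comp_def, List.rdrop_append_length,
    List.map_id']

lemma comp_f_of_prefix {ws u : List (List Γ)} {c : List Γ} (hws : [] ∉ ws)
    (hu : [γ] <+: u ++ [c]) :
    (comp σX Φ γ).f (ws.map (· ++ γ) ++ u) c = (Φ (ws.map (· ++ γ))).f u c := by
  have hws' : ∀ x ∈ ws.map (· ++ γ), isProperSuffixOf γ x = true := by
    simp only [List.mem_map]
    rintro _ ⟨v, hv, rfl⟩
    exact isProperSuffixOf_append (by rintro rfl; exact hws hv)
  have hγ : γ ∈ ws.map (· ++ γ) ++ u ++ [c] := by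
    rw [List.append_assoc]
    exact List.mem_append_right _ (hu.subset (List.mem_singleton_self γ))
  have hu' : u.takeWhile (isProperSuffixOf γ) = [] ∧ u.dropWhile (isProperSuffixOf γ) = u := by
    rcases u with _ | ⟨x, u⟩
    · simp
    · obtain ⟨rfl, -⟩ := List.cons_prefix_cons.mp hu
      simp [isProperSuffixOf_self]
  funext α
  show (if _ then _ else _) = _
  rw [if_neg fun h => by simpa [isProperSuffixOf_self] using List.all_eq_true.mp h γ hγ,
    List.takeWhile_append_of_pos hws', hu'.1, List.append_nil,
    List.dropWhile_append_of_pos hws', hu'.2]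


end Strat

section Lift

open Set

variable {σ : Δ.Strat Δ.isBox} {π : Δ.Strat Δ.isDiamond} {σ' : Δ.Strat Δ.isBox}
  {π' : Δ.Strat Δ.isDiamond} (T : Set (List Γ))

lemma reachN_shift (w₀ : List (List Γ)) (Inv : List (List Γ) → List Γ → Prop)
    (hInv : ∀ u c c', Inv u c → Inv (u ++ [c]) c')
    (hσ : ∀ u c, Inv u c → σ'.f u c = σ.f (w₀ ++ u) c)
    (hπ : ∀ u c, Inv u c → π'.f u c = π.f (w₀ ++ u) c) (n) :
    ∀ u c, Inv u c → Δ.reachN σ' π' T n u c = Δ.reachN σ π T n (w₀ ++ u) c := by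
  induction n with
  | zero => intro u c _; rfl
  | succ n ih =>
    intro u c hI
    simp only [reachN, stepP_congr (hσ u c hI) (hπ u c hI)]
    refine if_congr Iff.rfl rfl (tsum_congr fun c' => ?_)
    rw [ih _ c' (hInv u c c' hI), List.append_assoc]

/-- `[γ] <+: u ++ [c]` says that the play `u ++ [c]` started at `γ`. -/
lemma val_eq_of_agree_from {γ : List Γ} (w₀ : List (List Γ))
    (hσ : ∀ u c, [γ] <+: u ++ [c] → σ'.f u c = σ.f (w₀ ++ u) c)
    (hπ : ∀ u c, [γ] <+: u ++ [c] → π'.f u c = π.f (w₀ ++ u) c) :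
    Δ.val σ' π' T [] γ = Δ.val σ π T w₀ γ :=
  iSup_congr fun n => by
    simpa using reachN_shift T w₀ (fun u c => [γ] <+: u ++ [c])
      (fun _ _ _ h => h.trans (List.prefix_append _ _)) hσ hπ n [] γ (by simp)

lemma stepP_lift {γ : List Γ} (hσ : σ.Simulates σ' γ) (hπ : π.Simulates π' γ)
    {ws : List (List Γ)} (hws : [] ∉ ws) (X : Γ) (β c' : List Γ) :
    Δ.stepP σ' π' ws (X :: β) c' = Δ.stepP σ π (ws.map (· ++ γ)) (X :: β ++ γ) (c' ++ γ) := by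
  have hc : Δ.choice σ' π' ws (X :: β) = Δ.choice σ π (ws.map (· ++ γ)) (X :: (β ++ γ)) :=
    choice_cons_congr σ π (hσ ws (X :: β) hws (List.cons_ne_nil X β)).symm
    (hπ ws (X :: β) hws (List.cons_ne_nil X β)).symm
  simp only [List.cons_append, stepP, hc, ← List.append_assoc, List.append_left_inj]

variable (ΓT : Set Γ) {γ : List Γ} {R : List (List Γ) → ℝ}

lemma rewardN_le_val_lift (hσ : σ.Simulates σ' γ) (hπ : π.Simulates π' γ)
    (hR01 : ∀ ws, R ws ∈ Icc 0 1)
    (hR : ∀ ws, [] ∉ ws → R ws ≤ Δ.val σ π (topLang ΓT) (ws.map (· ++ γ)) γ) (n) :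
    ∀ ws d, [] ∉ ws → Δ.rewardN σ' π' (topLang ΓT) 1 R n ws d
      ≤ Δ.val σ π (topLang ΓT) (ws.map (· ++ γ)) (d ++ γ) := by
  have hterm : ∀ m ws d, [] ∉ ws → d = [] ∨ d ∈ topLang ΓT →
      Δ.rewardN σ' π' (topLang ΓT) 1 R m ws d
        ≤ Δ.val σ π (topLang ΓT) (ws.map (· ++ γ)) (d ++ γ) := by
    rintro m ws d hws (rfl | hdT)
    · simpa [rewardN_nil _ _ _ (nil_notMem_topLang ΓT)] using hR ws hws
    · have hd : d ≠ [] := by rintro rfl; exact nil_notMem_topLang ΓT hdT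
      rw [rewardN_of_mem _ _ _ hdT, val_of_mem _ _ _ ((append_mem_topLang_iff ΓT hd γ).mpr hdT)]
  induction n with
  | zero =>
    intro ws d hws
    by_cases h : d = [] ∨ d ∈ topLang ΓT
    · exact hterm 0 ws d hws h
    obtain ⟨hd, hdT⟩ := not_or.mp h
    rw [rewardN_zero_of_ne _ _ _ hdT hd]
    exact (val_mem_Icc _ _ _ _ _).1
  | succ n ih =>
    intro ws d hws
    by_cases h : d = [] ∨ d ∈ topLang ΓT
    · exact hterm (n + 1) ws d hws h
    obtain ⟨hd, hdT⟩ := not_or.mp h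
    obtain ⟨X, β, rfl⟩ := List.exists_cons_of_ne_nil hd
    have hws' : [] ∉ ws ++ [X :: β] := by simp [hws]
    have hT' : X :: β ++ γ ∉ topLang ΓT := (append_mem_topLang_iff ΓT hd γ).not.mpr hdT
    rw [rewardN_succ_of_ne _ _ _ hdT hd]
    refine le_trans ?_ (tsum_stepP_mul_val_le σ π _ hT' _)
    refine Summable.tsum_le_tsum_of_inj (· ++ γ) (List.append_left_injective γ)
      (fun c _ => mul_nonneg (stepP_nonneg σ π _ _ c) (val_mem_Icc σ π _ _ c).1)
      (fun d' => ?_) (summable_stepP_mul σ' π' (rewardN_mem_Icc _ _ _ ⟨zero_le_one, le_rfl⟩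
        hR01 n _) _ _) (summable_stepP_mul σ π (val_mem_Icc σ π _ _) _ _)
    rw [stepP_lift hσ hπ hws]
    refine mul_le_mul_of_nonneg_left ?_ (stepP_nonneg σ π _ _ _)
    simpa using ih (ws ++ [X :: β]) d' hws'

lemma reachN_lift_le_rewardN (hσ : σ.Simulates σ' γ) (hπ : π.Simulates π' γ)
    (hR01 : ∀ ws, R ws ∈ Icc 0 1)
    (hR : ∀ n ws, [] ∉ ws → Δ.reachN σ π (topLang ΓT) n (ws.map (· ++ γ)) γ ≤ R ws) (n) :
    ∀ ws d, [] ∉ ws → Δ.reachN σ π (topLang ΓT) n (ws.map (· ++ γ)) (d ++ γ)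
      ≤ Δ.rewardN σ' π' (topLang ΓT) 1 R n ws d := by
  have hterm : ∀ m ws d, [] ∉ ws → d = [] ∨ d ∈ topLang ΓT →
      Δ.reachN σ π (topLang ΓT) m (ws.map (· ++ γ)) (d ++ γ)
        ≤ Δ.rewardN σ' π' (topLang ΓT) 1 R m ws d := by
    rintro m ws d hws (rfl | hdT)
    · simpa [rewardN_nil _ _ _ (nil_notMem_topLang ΓT)] using hR m ws hws
    · rw [rewardN_of_mem _ _ _ hdT]
      exact (reachN_mem_Icc _ _ _ _ _ _).2
  induction n with
  | zero =>
    intro ws d hws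
    by_cases h : d = [] ∨ d ∈ topLang ΓT
    · exact hterm 0 ws d hws h
    obtain ⟨hd, hdT⟩ := not_or.mp h
    rw [reachN_zero_of_notMem _ _ _ ((append_mem_topLang_iff ΓT hd γ).not.mpr hdT),
      rewardN_zero_of_ne _ _ _ hdT hd]
  | succ n ih =>
    intro ws d hws
    by_cases h : d = [] ∨ d ∈ topLang ΓT
    · exact hterm (n + 1) ws d hws h
    obtain ⟨hd, hdT⟩ := not_or.mp h
    obtain ⟨X, β, rfl⟩ := List.exists_cons_of_ne_nil hd
    have hws' : [] ∉ ws ++ [X :: β] := by simp [hws]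
    have hT' : X :: β ++ γ ∉ topLang ΓT := (append_mem_topLang_iff ΓT hd γ).not.mpr hdT
    have hsupp : Function.support (fun c => Δ.stepP σ π (ws.map (· ++ γ)) (X :: β ++ γ) c
        * Δ.reachN σ π (topLang ΓT) n (ws.map (· ++ γ) ++ [X :: β ++ γ]) c)
        ⊆ Set.range (· ++ γ) := by
      intro c hc
      obtain ⟨α, rfl, -⟩ := exists_rule_of_stepP_ne_zero σ π (left_ne_zero_of_mul hc)
      exact ⟨α ++ β, List.append_assoc α β γ⟩
    rw [reachN_succ_of_notMem _ _ _ hT', rewardN_succ_of_ne _ _ _ hdT hd,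
      ← (List.append_left_injective γ).tsum_eq hsupp]
    refine Summable.tsum_le_tsum (fun d' => ?_) ?_ (summable_stepP_mul σ' π'
      (rewardN_mem_Icc _ _ _ ⟨zero_le_one, le_rfl⟩ hR01 n _) _ _)
    · rw [stepP_lift hσ hπ hws]
      refine mul_le_mul_of_nonneg_left ?_ (stepP_nonneg σ π _ _ _)
      simpa using ih (ws ++ [X :: β]) d' hws'
    · exact (summable_stepP_mul σ π (reachN_mem_Icc σ π _ n _) _ _).comp_injective
        (List.append_left_injective γ)

end Lift

section PopBound

open Set

variable (σ : Δ.Strat Δ.isBox) (π : Δ.Strat Δ.isDiamond) (T : Set (List Γ))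
  {R : List (List Γ) → ℝ}

lemma exists_forall_rewardN_le_lt_one (hT : [] ∉ T) (hR : ∀ w, R w ∈ Icc 0 1)
    (hRlt : ∀ w, [] ∉ w → R w < 1) {c : List Γ} (hc : Δ.val σ π T [] c < 1) :
    ∃ b < 1, ∀ n, Δ.rewardN σ π T 1 R n [] c ≤ b := by
  have h01 : (1 : ℝ) ∈ Icc 0 1 := ⟨zero_le_one, le_rfl⟩
  have h00 : (0 : ℝ) ∈ Icc 0 1 := ⟨le_rfl, zero_le_one⟩
  have hsub : ∀ w, 1 - R w ∈ Icc 0 1 := fun w => ⟨by linarith [(hR w).2], by linarith [(hR w).1]⟩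
  by_cases hpop : ∃ n₀, 0 < Δ.rewardN σ π T 0 (fun _ => 1) n₀ [] c
  · -- the deficit `1 - R` collected at `ε` is monotone in the horizon, hence bounded away from `0`
    obtain ⟨n₀, hn₀⟩ := hpop
    have hq := rewardN_pos σ π T hT hsub (fun w hw => sub_pos.mpr (hRlt w hw)) n₀ [] c
      List.not_mem_nil hn₀
    refine ⟨1 - Δ.rewardN σ π T 0 (fun w => 1 - R w) n₀ [] c, by linarith, fun n => ?_⟩
    have hsplit := rewardN_add σ π T h01 hR h00 hsub (n + n₀) [] c
    simp only [add_zero, add_sub_cancel] at hsplit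
    calc Δ.rewardN σ π T 1 R n [] c ≤ Δ.rewardN σ π T 1 R (n + n₀) [] c :=
          rewardN_monotone σ π T h01 hR [] c (Nat.le_add_right n n₀)
      _ ≤ 1 - Δ.rewardN σ π T 0 (fun w => 1 - R w) (n + n₀) [] c := by
          linarith [(rewardN_mem_Icc σ π T h01 (fun _ => h01) (n + n₀) [] c).2]
      _ ≤ 1 - Δ.rewardN σ π T 0 (fun w => 1 - R w) n₀ [] c := by
          linarith [rewardN_monotone σ π T h00 hsub [] c (Nat.le_add_left n₀ n)]
  · simp only [not_exists, not_lt] at hpop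
    refine ⟨Δ.val σ π T [] c, hc, fun n => ?_⟩
    have hsplit := rewardN_add σ π T h01 (fun _ => h00) h00 (fun _ => h01) n [] c
    simp only [add_zero, zero_add] at hsplit
    calc Δ.rewardN σ π T 1 R n [] c ≤ Δ.rewardN σ π T 1 (fun _ => 1) n [] c :=
          rewardN_mono σ π T h01 hR (fun _ => h01) (fun w => (hR w).2) le_rfl [] c
      _ ≤ Δ.reachN σ π T n [] c := by
          rw [reachN_eq_rewardN_zero σ π T hT]
          linarith [hpop n]
      _ ≤ Δ.val σ π T [] c := reachN_le_val σ π T n [] c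

end PopBound

lemma mem_WBoxOne_iff {T : Set (List Γ)} {c : List Γ} :
    c ∈ Δ.WBoxOne T ↔ ∃ σ : Δ.Strat Δ.isBox, ∀ π, Δ.val σ π T [] c = 1 :=
  Iff.rfl

lemma notMem_WBoxOne_iff {T : Set (List Γ)} {c : List Γ} :
    c ∉ Δ.WBoxOne T ↔ ∀ σ : Δ.Strat Δ.isBox, ∃ π, Δ.val σ π T [] c < 1 := by
  simp only [mem_WBoxOne_iff, not_exists, not_forall]
  exact forall_congr' fun σ => exists_congr fun π =>
    ⟨fun h => lt_of_le_of_ne (val_mem_Icc σ π T [] c).2 h, ne_of_lt⟩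

section Decomposition

variable (ΓT : Set Γ) (X : Γ) (γ : List Γ)

lemma nil_notMem_WBoxOne : [] ∉ Δ.WBoxOne (topLang ΓT) := by
  rintro ⟨σ, hσ⟩
  have h : Δ.val σ _ (topLang ΓT) [] [] = 1 := hσ (Classical.arbitrary _)
  rw [val_nil _ _ _ (nil_notMem_topLang ΓT)] at h
  exact zero_ne_one h

lemma cons_mem_WBoxOne_of_head (h : [X] ∈ Δ.WBoxOne (topLang ΓT)) :
    X :: γ ∈ Δ.WBoxOne (topLang ΓT) := by
  obtain ⟨σX, hσX⟩ := h
  refine ⟨Strat.comp σX (fun _ => σX) γ, fun π => le_antisymm (val_mem_Icc _ _ _ _ _).2 ?_⟩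
  refine (hσX (π.proj γ)).symm.le.trans (ciSup_le fun n => ?_)
  rw [reachN_eq_rewardN_zero _ _ _ (nil_notMem_topLang ΓT)]
  exact rewardN_le_val_lift ΓT (Strat.comp_simulates σX _ γ) (Strat.simulates_proj π γ)
    (fun _ => ⟨le_rfl, zero_le_one⟩) (fun _ _ => (val_mem_Icc _ _ _ _ _).1) n [] [X]
    List.not_mem_nil

lemma cons_mem_WBoxOne_of_head_of_tail (hX : [X] ∈ Δ.WBoxOne (topLang ΓT ∪ {[]}))
    (hγ : γ ∈ Δ.WBoxOne (topLang ΓT)) : X :: γ ∈ Δ.WBoxOne (topLang ΓT) := by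
  obtain ⟨σX, hσX⟩ := hX
  obtain ⟨σγ, hσγ⟩ := hγ
  refine ⟨Strat.comp σX (fun _ => σγ) γ, fun π => le_antisymm (val_mem_Icc _ _ _ _ _).2 ?_⟩
  refine (hσX (π.proj γ)).symm.le.trans (ciSup_le fun n => ?_)
  rw [reachN_union_nil_eq_rewardN_one _ _ _ (nil_notMem_topLang ΓT)]
  refine rewardN_le_val_lift ΓT (Strat.comp_simulates σX _ γ) (Strat.simulates_proj π γ)
    (fun _ => ⟨zero_le_one, le_rfl⟩) (fun ws hws => ?_) n [] [X] List.not_mem_nil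
  exact ((hσγ _).symm.trans (val_eq_of_agree_from _ _ (σ' := σγ) (π' := π.after _)
    (fun u c hu => (Strat.comp_f_of_prefix σX (fun _ => σγ) γ hws hu).symm) fun _ _ _ => rfl)).le

lemma head_mem_WBoxOne_union_nil (h : X :: γ ∈ Δ.WBoxOne (topLang ΓT)) :
    [X] ∈ Δ.WBoxOne (topLang ΓT ∪ {[]}) := by
  obtain ⟨σ, hσ⟩ := h
  refine ⟨σ.proj γ, fun π' => le_antisymm (val_mem_Icc _ _ _ _ _).2 ?_⟩
  refine (hσ (Strat.comp π' (fun _ => π') γ)).symm.le.trans (ciSup_le fun n => ?_)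
  refine (reachN_lift_le_rewardN ΓT (Strat.simulates_proj σ γ) (Strat.comp_simulates π' _ γ)
    (fun _ => ⟨zero_le_one, le_rfl⟩) (fun _ _ _ => (reachN_mem_Icc _ _ _ _ _ _).2) n [] [X]
    List.not_mem_nil).trans ?_
  rw [← reachN_union_nil_eq_rewardN_one _ _ _ (nil_notMem_topLang ΓT)]
  exact reachN_le_val _ _ _ n [] [X]

lemma tail_mem_WBoxOne (h : X :: γ ∈ Δ.WBoxOne (topLang ΓT))
    (hX : [X] ∉ Δ.WBoxOne (topLang ΓT)) : γ ∈ Δ.WBoxOne (topLang ΓT) := by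
  by_contra hγ
  obtain ⟨σ, hσ⟩ := h
  obtain ⟨π₁, hπ₁⟩ := notMem_WBoxOne_iff.mp hX (σ.proj γ)
  -- Diamond's reply `Φ h` after the head phase `h` must depend on `h`, since `σ` does
  choose Φ hΦ using fun w => notMem_WBoxOne_iff.mp hγ (σ.after w)
  set π := Strat.comp π₁ Φ γ
  have hRlt : ∀ ws : List (List Γ), [] ∉ ws →
      Δ.val σ π (topLang ΓT) (ws.map (· ++ γ)) γ < 1 := fun ws hws =>
    (val_eq_of_agree_from _ _ (σ' := σ.after _) (π' := Φ _) (fun _ _ _ => rfl)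
      fun u c hu => (Strat.comp_f_of_prefix π₁ Φ γ hws hu).symm).symm.trans_lt (hΦ _)
  obtain ⟨b, hb, hbound⟩ := exists_forall_rewardN_le_lt_one (σ.proj γ) π₁ _
    (nil_notMem_topLang ΓT) (fun _ => val_mem_Icc _ _ _ _ _) hRlt hπ₁
  have hle : Δ.val σ π (topLang ΓT) [] (X :: γ) ≤ b := ciSup_le fun n =>
    (reachN_lift_le_rewardN ΓT (Strat.simulates_proj σ γ) (Strat.comp_simulates π₁ Φ γ)
      (fun _ => val_mem_Icc _ _ _ _ _) (fun n _ _ => reachN_le_val _ _ _ n _ _) n [] [X]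
      List.not_mem_nil).trans (hbound n)
  have hwin : Δ.val σ π (topLang ΓT) [] (X :: γ) = 1 := hσ π
  linarith

lemma cons_mem_WBoxOne_iff : X :: γ ∈ Δ.WBoxOne (topLang ΓT) ↔
    [X] ∈ Δ.WBoxOne (topLang ΓT) ∨
      ([X] ∈ Δ.WBoxOne (topLang ΓT ∪ {[]}) ∧ γ ∈ Δ.WBoxOne (topLang ΓT)) :=
  ⟨fun h => or_iff_not_imp_left.mpr fun hX =>
      ⟨head_mem_WBoxOne_union_nil ΓT X γ h, tail_mem_WBoxOne ΓT X γ h hX⟩,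
    fun h => h.elim (cons_mem_WBoxOne_of_head ΓT X γ)
      fun ⟨hX, hγ⟩ => cons_mem_WBoxOne_of_head_of_tail ΓT X γ hX hγ⟩

end Decomposition

lemma WBoxOne_eq_kstar_symLang_mul (ΓT : Set Γ) :
    (Δ.WBoxOne (topLang ΓT) : Language Γ)
      = KStar.kstar (symLang {X | [X] ∈ Δ.WBoxOne (topLang ΓT ∪ {[]})})
        * symLang {X | [X] ∈ Δ.WBoxOne (topLang ΓT)} * ⊤ := by
  ext c
  induction c with
  | nil => exact iff_of_false (nil_notMem_WBoxOne ΓT) (nil_notMem_kstar_symLang_mul _ _)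
  | cons X γ ih =>
    exact (cons_mem_WBoxOne_iff ΓT X γ).trans ((or_congr Iff.rfl (and_congr Iff.rfl ih)).trans
      (cons_mem_kstar_symLang_mul_iff {Y | [Y] ∈ Δ.WBoxOne (topLang ΓT ∪ {[]})}
        {Y | [Y] ∈ Δ.WBoxOne (topLang ΓT)} X γ).symm)

end BPA

theorem WBoxOne_eq_regular_general {Γ : Type*} [Fintype Γ] (Δ : BPA Γ) (ΓT : Set Γ)
    (B D : Set Γ)
    (hB : B = {X | [X] ∈ Δ.WBoxOne (topLang ΓT ∪ {([] : List Γ)})})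
    (hD : D = {X | [X] ∈ Δ.WBoxOne (topLang ΓT)}) :
    (Δ.WBoxOne (topLang ΓT) : Language Γ)
        = KStar.kstar (symLang B) * symLang D * (⊤ : Language Γ) ∧
      Language.IsRegular (Δ.WBoxOne (topLang ΓT) : Language Γ) := by
  subst hB hD
  have h := BPA.WBoxOne_eq_kstar_symLang_mul (Δ := Δ) ΓT
  exact ⟨h, h ▸ isRegular_kstar_symLang_mul _ _⟩

/-- `W_Box(T,=1) = B* D Γ*` where `B = W_Box(T_ε,=1) ∩ Γ` and
`D = W_Box(T,=1) ∩ Γ`; consequently `W_Box(T,=1)` is a regular language. -/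
theorem WBoxOne_eq_regular {Γ : Type*} [Fintype Γ] (Δ : BPA Γ) (ΓT : Set Γ)
    (hT : ∀ R ∈ ΓT, ∀ α, Δ.rule R α ↔ α = [R])
    (B D : Set Γ)
    (hB : B = {X | [X] ∈ Δ.WBoxOne (topLang ΓT ∪ {([] : List Γ)})})
    (hD : D = {X | [X] ∈ Δ.WBoxOne (topLang ΓT)}) :
    (Δ.WBoxOne (topLang ΓT) : Language Γ)
        = KStar.kstar (symLang B) * symLang D * (⊤ : Language Γ) ∧
      Language.IsRegular (Δ.WBoxOne (topLang ΓT) : Language Γ) :=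
  WBoxOne_eq_regular_general Δ ΓT B D hB hD
end
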